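/- Let (Φ_t)_{t≥0} be a semigroup of linear, positive, trace-preserving maps on M_n(ℂ) (Φ_0 = id, Φ_{t+s} = Φ_t ∘ Φ_s), let ρ° be a state with Φ_t(ρ°) = ρ° for all t ≥ 0, and suppose there are t₀ > 0 and ε ∈ (0,1] such that Φ_{t₀}(ρ) ≥ ε·ρ° (Loewner order) for every state ρ. Then for every t ≥ 0 and every state ρ, ‖Φ_t(ρ) − ρ°‖₁ ≤ (1 − ε)^{⌊t/t₀⌋} · ‖ρ − ρ°‖₁. -/

import Mathlib

/-!
Write `‖A‖₁ = re tr |A|`.  A Hermitian `A` splits as `A⁺ - A⁻` with `tr A⁺ + tr A⁻ = ‖A‖₁`,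
while `‖P - Q‖₁ ≤ tr P + tr Q` for positive `P, Q` (compare diagonal entries in an eigenbasis
of `P - Q`); hence positive trace-preserving maps contract `‖·‖₁` on Hermitian matrices.
If moreover `tr A = 0`, then `tr A⁺ = tr A⁻ =: p`, and the minorization allows subtracting
`ε p ρ°` from both `Ψ A⁺` and `Ψ A⁻` while keeping them positive, so that
`‖Ψ A‖₁ ≤ 2 (1 - ε) p = (1 - ε) ‖A‖₁`.  Apply this `⌊t / t₀⌋` times to `ρ - ρ°` and absorb
the remaining time `t - ⌊t / t₀⌋ t₀` by contraction.
-/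

open scoped ComplexOrder

/-- The trace norm of a matrix: `‖A‖₁ = Tr √(Aᴴ A)`.  For a Hermitian matrix this is
the sum of the absolute values of its eigenvalues. -/
noncomputable def traceNorm {n : ℕ} (A : Matrix (Fin n) (Fin n) ℂ) : ℝ :=
  (((Matrix.posSemidef_conjTranspose_mul_self A).1.eigenvectorUnitary : Matrix (Fin n) (Fin n) ℂ) *
    Matrix.diagonal (fun i => ((√((Matrix.posSemidef_conjTranspose_mul_self A).1.eigenvalues i) : ℝ) : ℂ)) *
    (star (Matrix.posSemidef_conjTranspose_mul_self A).1.eigenvectorUnitary :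
      Matrix (Fin n) (Fin n) ℂ)).trace.re

open scoped MatrixOrder
open Matrix

namespace Matrix

variable {𝕜 m : Type*} [RCLike 𝕜] [Fintype m] [DecidableEq m]

lemma IsHermitian.trace_cfc {A : Matrix m m 𝕜} (hA : A.IsHermitian) (f : ℝ → ℝ) :
    (cfc f A).trace = ∑ i, (f (hA.eigenvalues i) : 𝕜) := by
  rw [hA.cfc_eq, IsHermitian.cfc, Unitary.conjStarAlgAut_apply, trace_mul_cycle,
    Unitary.coe_star_mul_self, one_mul, trace_diagonal]
  rfl

lemma IsHermitian.re_trace_abs {A : Matrix m m 𝕜} (hA : A.IsHermitian) :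
    RCLike.re (CFC.abs A).trace = ∑ i, |hA.eigenvalues i| := by
  rw [CFC.abs_eq_cfc_norm A hA, hA.trace_cfc, map_sum]
  simp

lemma IsHermitian.trace_eq_sum_dotProduct_eigenvectorBasis {A : Matrix m m 𝕜}
    (hA : A.IsHermitian) (P : Matrix m m 𝕜) :
    P.trace = ∑ i, star ⇑(hA.eigenvectorBasis i) ⬝ᵥ (P *ᵥ ⇑(hA.eigenvectorBasis i)) := by
  have hU := mem_unitaryGroup_iff.mp hA.eigenvectorUnitary.2
  calc P.trace
      = (star (hA.eigenvectorUnitary : Matrix m m 𝕜) * P * hA.eigenvectorUnitary).trace := by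
        rw [trace_mul_cycle, hU, one_mul]
    _ = _ := by
        simp only [trace, diag, mul_apply, dotProduct, mulVec, Finset.sum_mul, Finset.mul_sum]
        refine Finset.sum_congr rfl fun i _ => Finset.sum_comm.trans ?_
        simp [mul_assoc]

lemma PosSemidef.re_trace_abs_sub_le {P Q : Matrix m m 𝕜} (hP : P.PosSemidef)
    (hQ : Q.PosSemidef) : RCLike.re (CFC.abs (P - Q)).trace ≤ RCLike.re (P.trace + Q.trace) := by
  have hPQ := hP.1.sub hQ.1
  rw [hPQ.re_trace_abs, hPQ.trace_eq_sum_dotProduct_eigenvectorBasis P,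
    hPQ.trace_eq_sum_dotProduct_eigenvectorBasis Q, ← Finset.sum_add_distrib, map_sum]
  refine Finset.sum_le_sum fun i _ => ?_
  have hPi := hP.re_dotProduct_nonneg (hPQ.eigenvectorBasis i)
  have hQi := hQ.re_dotProduct_nonneg (hPQ.eigenvectorBasis i)
  rw [hPQ.eigenvalues_eq i, sub_mulVec, dotProduct_sub, map_sub, map_add]
  exact (abs_sub _ _).trans_eq (by rw [abs_of_nonneg hPi, abs_of_nonneg hQi])

lemma IsHermitian.trace_posPart_add_negPart {A : Matrix m m 𝕜} (hA : A.IsHermitian) :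
    A⁺.trace + A⁻.trace = (CFC.abs A).trace := by
  rw [← trace_add, CFC.posPart_add_negPart A hA]

end Matrix

lemma traceNorm_eq_re_trace_abs {n : ℕ} (A : Matrix (Fin n) (Fin n) ℂ) :
    traceNorm A = (CFC.abs A).trace.re := by
  have hB := posSemidef_conjTranspose_mul_self A
  rw [CFC.abs, CFC.sqrt_eq_cfc, star_eq_conjTranspose, cfc_nnreal_eq_real _ _ hB.nonneg,
    hB.1.cfc_eq, IsHermitian.cfc, Unitary.conjStarAlgAut_apply]
  unfold traceNorm
  congr 5
  funext i
  simp only [Function.comp_apply, Real.sqrt]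
  rfl

section

variable {𝕜 m : Type*} [RCLike 𝕜] [Fintype m]

lemma posSemidef_map_sub_smul_of_doeblin {Ψ : Module.End 𝕜 (Matrix m m 𝕜)} {ρ₀ : Matrix m m 𝕜}
    {ε : ℝ}
    (hDoeblin : ∀ ρ : Matrix m m 𝕜, ρ.PosSemidef → ρ.trace = 1 →
      (Ψ ρ - (ε : 𝕜) • ρ₀).PosSemidef)
    {P : Matrix m m 𝕜} (hP : P.PosSemidef) :
    (Ψ P - ((ε : 𝕜) * P.trace) • ρ₀).PosSemidef := by
  by_cases hP0 : P.trace = 0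
  · simp [hP.trace_eq_zero_iff.mp hP0, PosSemidef.zero]
  · have hρ : ((P.trace)⁻¹ • P).PosSemidef := hP.smul (inv_nonneg.mpr hP.trace_nonneg)
    have hρtr : ((P.trace)⁻¹ • P).trace = 1 := by
      rw [trace_smul, smul_eq_mul, inv_mul_cancel₀ hP0]
    have hrescale : Ψ P - ((ε : 𝕜) * P.trace) • ρ₀ =
        P.trace • (Ψ ((P.trace)⁻¹ • P) - (ε : 𝕜) • ρ₀) := by
      rw [map_smul, smul_sub, smul_smul, smul_smul, mul_inv_cancel₀ hP0, one_smul, mul_comm]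
    rw [hrescale]
    exact (hDoeblin _ hρ hρtr).smul hP.trace_nonneg

structure IsPositiveTracePreserving (Ψ : Module.End 𝕜 (Matrix m m 𝕜)) : Prop where
  posSemidef_map : ∀ A : Matrix m m 𝕜, A.PosSemidef → (Ψ A).PosSemidef
  trace_map : ∀ A : Matrix m m 𝕜, (Ψ A).trace = A.trace

namespace IsPositiveTracePreserving

variable {Ψ Ψ' : Module.End 𝕜 (Matrix m m 𝕜)}

lemma mul (hΨ : IsPositiveTracePreserving Ψ) (hΨ' : IsPositiveTracePreserving Ψ') :
    IsPositiveTracePreserving (Ψ * Ψ') :=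
  ⟨fun A hA => hΨ.posSemidef_map _ (hΨ'.posSemidef_map A hA),
    fun A => (hΨ.trace_map _).trans (hΨ'.trace_map A)⟩

lemma pow (hΨ : IsPositiveTracePreserving Ψ) (k : ℕ) : IsPositiveTracePreserving (Ψ ^ k) := by
  induction k with
  | zero => exact ⟨fun A hA => hA, fun A => rfl⟩
  | succ k ih => rw [pow_succ]; exact ih.mul hΨ

lemma isHermitian_map [DecidableEq m] (hΨ : IsPositiveTracePreserving Ψ) {A : Matrix m m 𝕜}
    (hA : A.IsHermitian) : (Ψ A).IsHermitian := by
  rw [← CFC.posPart_sub_negPart A hA, map_sub]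
  exact (hΨ.posSemidef_map _ (CFC.posPart_nonneg A).posSemidef).1.sub
    (hΨ.posSemidef_map _ (CFC.negPart_nonneg A).posSemidef).1

end IsPositiveTracePreserving

end

namespace IsPositiveTracePreserving

variable {n : ℕ} {Ψ : Module.End ℂ (Matrix (Fin n) (Fin n) ℂ)}

lemma traceNorm_map_le (hΨ : IsPositiveTracePreserving Ψ) {A : Matrix (Fin n) (Fin n) ℂ}
    (hA : A.IsHermitian) : traceNorm (Ψ A) ≤ traceNorm A := by
  have hP := (CFC.posPart_nonneg A).posSemidef
  have hQ := (CFC.negPart_nonneg A).posSemidef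
  calc traceNorm (Ψ A) = (CFC.abs (Ψ A⁺ - Ψ A⁻)).trace.re := by
        rw [traceNorm_eq_re_trace_abs, ← map_sub, CFC.posPart_sub_negPart A hA]
    _ ≤ ((Ψ A⁺).trace + (Ψ A⁻).trace).re :=
        (hΨ.posSemidef_map _ hP).re_trace_abs_sub_le (hΨ.posSemidef_map _ hQ)
    _ = traceNorm A := by
        rw [hΨ.trace_map, hΨ.trace_map, hA.trace_posPart_add_negPart, traceNorm_eq_re_trace_abs]

lemma traceNorm_map_le_of_doeblin (hΨ : IsPositiveTracePreserving Ψ)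
    {ρ₀ : Matrix (Fin n) (Fin n) ℂ} (hρ₀tr : ρ₀.trace = 1) {ε : ℝ}
    (hDoeblin : ∀ ρ : Matrix (Fin n) (Fin n) ℂ, ρ.PosSemidef → ρ.trace = 1 →
      (Ψ ρ - (ε : ℂ) • ρ₀).PosSemidef)
    {A : Matrix (Fin n) (Fin n) ℂ} (hA : A.IsHermitian) (hA0 : A.trace = 0) :
    traceNorm (Ψ A) ≤ (1 - ε) * traceNorm A := by
  have hP := (CFC.posPart_nonneg A).posSemidef
  have hQ := (CFC.negPart_nonneg A).posSemidef
  have htr : A⁻.trace = A⁺.trace := by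
    rw [eq_comm, ← sub_eq_zero, ← trace_sub, CFC.posPart_sub_negPart A hA, hA0]
  set c : ℂ := ε * A⁺.trace
  have hsplit : Ψ A = (Ψ A⁺ - c • ρ₀) - (Ψ A⁻ - c • ρ₀) := by
    rw [sub_sub_sub_cancel_right, ← map_sub, CFC.posPart_sub_negPart A hA]
  have hP' := posSemidef_map_sub_smul_of_doeblin hDoeblin hP
  have hQ' := posSemidef_map_sub_smul_of_doeblin hDoeblin hQ
  rw [htr] at hQ'
  calc traceNorm (Ψ A) ≤ ((Ψ A⁺ - c • ρ₀).trace + (Ψ A⁻ - c • ρ₀).trace).re := by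
        rw [hsplit, traceNorm_eq_re_trace_abs]
        exact hP'.re_trace_abs_sub_le hQ'
    _ = (((1 - ε : ℝ) : ℂ) * (A⁺.trace + A⁻.trace)).re := by
        simp only [trace_sub, trace_smul, hΨ.trace_map, hρ₀tr, smul_eq_mul, c, htr]
        congr 1
        push_cast
        ring
    _ = (1 - ε) * traceNorm A := by
        rw [Complex.re_ofReal_mul, hA.trace_posPart_add_negPart, traceNorm_eq_re_trace_abs]

lemma traceNorm_pow_map_le_of_doeblin (hΨ : IsPositiveTracePreserving Ψ)
    {ρ₀ : Matrix (Fin n) (Fin n) ℂ} (hρ₀tr : ρ₀.trace = 1) {ε : ℝ} (hε1 : ε ≤ 1)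
    (hDoeblin : ∀ ρ : Matrix (Fin n) (Fin n) ℂ, ρ.PosSemidef → ρ.trace = 1 →
      (Ψ ρ - (ε : ℂ) • ρ₀).PosSemidef)
    (k : ℕ) {A : Matrix (Fin n) (Fin n) ℂ} (hA : A.IsHermitian) (hA0 : A.trace = 0) :
    traceNorm ((Ψ ^ k) A) ≤ (1 - ε) ^ k * traceNorm A := by
  induction k generalizing A with
  | zero => simp
  | succ k ih =>
    calc traceNorm ((Ψ ^ (k + 1)) A) = traceNorm ((Ψ ^ k) (Ψ A)) := by
          rw [pow_succ, Module.End.mul_apply]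
      _ ≤ (1 - ε) ^ k * traceNorm (Ψ A) :=
          ih (hΨ.isHermitian_map hA) (by rw [hΨ.trace_map, hA0])
      _ ≤ (1 - ε) ^ k * ((1 - ε) * traceNorm A) := by
          have := sub_nonneg.mpr hε1
          gcongr
          exact hΨ.traceNorm_map_le_of_doeblin hρ₀tr hDoeblin hA hA0
      _ = (1 - ε) ^ (k + 1) * traceNorm A := by ring

end IsPositiveTracePreserving

lemma semigroup_add_nat_mul {M : Type*} [Monoid M] {Φ : ℝ → M}
    (hsemi : ∀ t s : ℝ, 0 ≤ t → 0 ≤ s → Φ (t + s) = Φ t * Φ s) {r τ : ℝ} (hr : 0 ≤ r)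
    (hτ : 0 ≤ τ) (k : ℕ) : Φ (r + k * τ) = Φ r * Φ τ ^ k := by
  induction k with
  | zero => simp
  | succ k ih =>
    rw [Nat.cast_succ, add_one_mul, ← add_assoc, hsemi _ _ (by positivity) hτ, ih, pow_succ,
      mul_assoc]

theorem doeblin_semigroup_mixing_general {n : ℕ}
    (Φ : ℝ → Module.End ℂ (Matrix (Fin n) (Fin n) ℂ))
    (hsemi : ∀ t s : ℝ, 0 ≤ t → 0 ≤ s → Φ (t + s) = Φ t * Φ s)
    (hpos : ∀ t : ℝ, 0 ≤ t →
      ∀ A : Matrix (Fin n) (Fin n) ℂ, A.PosSemidef → (Φ t A).PosSemidef)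
    (htr : ∀ t : ℝ, 0 ≤ t →
      ∀ A : Matrix (Fin n) (Fin n) ℂ, (Φ t A).trace = A.trace)
    (ρ₀ : Matrix (Fin n) (Fin n) ℂ) (hρ₀ : ρ₀.PosSemidef) (hρ₀tr : ρ₀.trace = 1)
    (hfix : ∀ t : ℝ, 0 ≤ t → Φ t ρ₀ = ρ₀)
    (t₀ : ℝ) (ht₀ : 0 < t₀)
    (ε : ℝ) (hε1 : ε ≤ 1)
    (hDoeblin : ∀ ρ : Matrix (Fin n) (Fin n) ℂ, ρ.PosSemidef → ρ.trace = 1 →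
      (Φ t₀ ρ - (ε : ℂ) • ρ₀).PosSemidef)
    (t : ℝ) (ht : 0 ≤ t)
    (ρ : Matrix (Fin n) (Fin n) ℂ) (hρ : ρ.PosSemidef) (hρtr : ρ.trace = 1) :
    traceNorm (Φ t ρ - ρ₀) ≤ (1 - ε) ^ ⌊t / t₀⌋₊ * traceNorm (ρ - ρ₀) := by
  have hΦ (s : ℝ) (hs : 0 ≤ s) : IsPositiveTracePreserving (Φ s) := ⟨hpos s hs, htr s hs⟩
  set k := ⌊t / t₀⌋₊
  have hk : k * t₀ ≤ t := (le_div_iff₀ ht₀).mp (Nat.floor_le (div_nonneg ht ht₀.le))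
  have hr : 0 ≤ t - k * t₀ := sub_nonneg.mpr hk
  have hdecomp : Φ t = Φ (t - k * t₀) * Φ t₀ ^ k := by
    simpa using semigroup_add_nat_mul hsemi hr ht₀.le k
  have hΔ : (ρ - ρ₀).IsHermitian := hρ.1.sub hρ₀.1
  have hΔ0 : (ρ - ρ₀).trace = 0 := by rw [trace_sub, hρtr, hρ₀tr, sub_self]
  calc traceNorm (Φ t ρ - ρ₀) = traceNorm (Φ (t - k * t₀) ((Φ t₀ ^ k) (ρ - ρ₀))) := by
        rw [← Module.End.mul_apply, ← hdecomp, map_sub, hfix t ht]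
    _ ≤ traceNorm ((Φ t₀ ^ k) (ρ - ρ₀)) :=
        (hΦ _ hr).traceNorm_map_le (((hΦ t₀ ht₀.le).pow k).isHermitian_map hΔ)
    _ ≤ (1 - ε) ^ k * traceNorm (ρ - ρ₀) :=
        (hΦ t₀ ht₀.le).traceNorm_pow_map_le_of_doeblin hρ₀tr hε1 hDoeblin k hΔ hΔ0

/-- Continuous-time mixing estimate for a positive trace-preserving semigroup satisfying a
Doeblin-type minorization at some time `t₀`:
`‖Φ_t(ρ) − ρ°‖₁ ≤ (1−ε)^⌊t/t₀⌋ ‖ρ − ρ°‖₁`. -/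
theorem doeblin_semigroup_mixing {n : ℕ}
    (Φ : ℝ → Module.End ℂ (Matrix (Fin n) (Fin n) ℂ))
    (hΦ0 : Φ 0 = 1)
    (hsemi : ∀ t s : ℝ, 0 ≤ t → 0 ≤ s → Φ (t + s) = Φ t * Φ s)
    (hpos : ∀ t : ℝ, 0 ≤ t →
      ∀ A : Matrix (Fin n) (Fin n) ℂ, A.PosSemidef → (Φ t A).PosSemidef)
    (htr : ∀ t : ℝ, 0 ≤ t →
      ∀ A : Matrix (Fin n) (Fin n) ℂ, (Φ t A).trace = A.trace)
    (ρ₀ : Matrix (Fin n) (Fin n) ℂ) (hρ₀ : ρ₀.PosSemidef) (hρ₀tr : ρ₀.trace = 1)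
    (hfix : ∀ t : ℝ, 0 ≤ t → Φ t ρ₀ = ρ₀)
    (t₀ : ℝ) (ht₀ : 0 < t₀)
    (ε : ℝ) (hε0 : 0 < ε) (hε1 : ε ≤ 1)
    (hDoeblin : ∀ ρ : Matrix (Fin n) (Fin n) ℂ, ρ.PosSemidef → ρ.trace = 1 →
      (Φ t₀ ρ - (ε : ℂ) • ρ₀).PosSemidef)
    (t : ℝ) (ht : 0 ≤ t)
    (ρ : Matrix (Fin n) (Fin n) ℂ) (hρ : ρ.PosSemidef) (hρtr : ρ.trace = 1) :
    traceNorm (Φ t ρ - ρ₀) ≤ (1 - ε) ^ ⌊t / t₀⌋₊ * traceNorm (ρ - ρ₀) :=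
  doeblin_semigroup_mixing_general Φ hsemi hpos htr ρ₀ hρ₀ hρ₀tr hfix t₀ ht₀ ε hε1 hDoeblin t ht ρ
    hρ hρtr
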